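/- arXiv:2107.13447 — 6 statements merged into one kernel-verified Lean document; each statement's English description precedes it below -/
import Mathlib

section
/- Let K be a field of characteristic zero which is not algebraically closed but such that the quadratic extension K[X]/(X^2+1) is an algebraically closed field. Let K_{>0} = {a^2 : a ∈ K, a ≠ 0}. Then K_{>0} is closed under addition: for all a, b ∈ K_{>0}, a + b ∈ K_{>0}. (Together with the obvious closure under multiplication and inverses, K_{>0} is a semifield.) -/
open Polynomial

/-!
Write `i` for the class of `X` in `K[X]/(X²+1)`. Given `c, d` with `c ≠ 0`, a square root
`x + y i` of `c + d i` gives `c = x² - y²` and `d = 2xy`, hence `c² + d² = (x² + y²)²`; and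
`x² + y² = (x + y i)(x - y i)` vanishes only for `x = y = 0` because `K[X]/(X²+1)` is a domain.
-/

namespace Polynomial

variable {R : Type*} [CommRing R]

theorem monic_X_sq_add_one : (X ^ 2 + 1 : R[X]).Monic :=
  monic_X_pow_add_C 1 two_ne_zero

theorem degree_X_sq_add_one [Nontrivial R] : (X ^ 2 + 1 : R[X]).degree = 2 := by
  compute_degree!

end Polynomial

namespace AdjoinRoot

variable {R : Type*} [CommRing R]

theorem exists_mk_linear_eq [Nontrivial R] (w : AdjoinRoot (X ^ 2 + 1 : R[X])) :
    ∃ a b : R, mk (X ^ 2 + 1) (C a * X + C b) = w := by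
  obtain ⟨q, rfl⟩ := mk_surjective w
  have hdeg := degree_modByMonic_lt q (monic_X_sq_add_one (R := R))
  rw [degree_X_sq_add_one] at hdeg
  have hq := mk_leftInverse monic_X_sq_add_one (mk _ q)
  rw [modByMonicHom_mk, eq_X_add_C_of_degree_le_one (Order.le_of_lt_succ hdeg)] at hq
  exact ⟨_, _, hq⟩

theorem mk_linear_inj [Nontrivial R] {a b c d : R} :
    mk (X ^ 2 + 1) (C a * X + C b) = mk (X ^ 2 + 1) (C c * X + C d) ↔ a = c ∧ b = d := by
  refine ⟨fun h => ?_, by rintro ⟨rfl, rfl⟩; rfl⟩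
  have hlin (a b : R) : (C a * X + C b) %ₘ (X ^ 2 + 1) = C a * X + C b :=
    (modByMonic_eq_self_iff monic_X_sq_add_one).2 (degree_X_sq_add_one (R := R) ▸ degree_linear_lt)
  have h' := congrArg (modByMonicHom monic_X_sq_add_one) h
  rw [modByMonicHom_mk, modByMonicHom_mk, hlin, hlin] at h'
  exact ⟨by simpa using congrArg (coeff · 1) h', by simpa using congrArg (coeff · 0) h'⟩

theorem mk_linear_mul_mk_linear (a b c d : R) :
    mk (X ^ 2 + 1) (C a * X + C b) * mk (X ^ 2 + 1) (C c * X + C d) =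
      mk (X ^ 2 + 1) (C (a * d + b * c) * X + C (b * d - a * c)) := by
  rw [← map_mul, mk_eq_mk]
  exact ⟨C (a * c), by simp only [map_add, map_sub, map_mul]; ring⟩

theorem exists_eq_sq_sub_sq_and_eq_two_mul [Nontrivial R] {c d : R}
    (h : IsSquare (mk (X ^ 2 + 1) (C d * X + C c))) :
    ∃ x y : R, c = x ^ 2 - y ^ 2 ∧ d = 2 * x * y := by
  obtain ⟨w, hw⟩ := h
  obtain ⟨y, x, rfl⟩ := exists_mk_linear_eq w
  obtain ⟨hd, hc⟩ := mk_linear_inj.1 (hw.trans (mk_linear_mul_mk_linear y x y x))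
  exact ⟨x, y, by rw [hc]; ring, by rw [hd]; ring⟩

theorem eq_zero_of_sq_add_sq_eq_zero [Nontrivial R]
    [NoZeroDivisors (AdjoinRoot (X ^ 2 + 1 : R[X]))] {x y : R} (h : x ^ 2 + y ^ 2 = 0) :
    x = 0 ∧ y = 0 := by
  have hzero : mk (X ^ 2 + 1) (C (0 : R) * X + C 0) = 0 := by simp
  have hnorm := mk_linear_mul_mk_linear y x (-y) x
  rw [show y * x + x * -y = 0 by ring, show x * x - y * -y = 0 by rw [← h]; ring, hzero] at hnorm
  rcases mul_eq_zero.1 hnorm with hw | hw <;> rw [← hzero] at hw <;>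
    obtain ⟨hy, hx⟩ := mk_linear_inj.1 hw
  · exact ⟨hx, hy⟩
  · exact ⟨hx, neg_eq_zero.1 hy⟩

end AdjoinRoot

theorem pos_closed_under_add_general (K : Type*) [Field K]
    (hfield : IsField (AdjoinRoot ((X : Polynomial K) ^ 2 + 1)))
    (halg : @IsAlgClosed (AdjoinRoot ((X : Polynomial K) ^ 2 + 1)) hfield.toField)
    (a b : K)
    (ha : a ∈ {x : K | ∃ c : K, c ≠ 0 ∧ x = c ^ 2})
    (hb : b ∈ {x : K | ∃ c : K, c ≠ 0 ∧ x = c ^ 2}) :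
    a + b ∈ {x : K | ∃ c : K, c ≠ 0 ∧ x = c ^ 2} := by
  let := hfield.toField
  obtain ⟨c, hc, rfl⟩ := ha
  obtain ⟨d, -, rfl⟩ := hb
  obtain ⟨x, y, rfl, rfl⟩ := AdjoinRoot.exists_eq_sq_sub_sq_and_eq_two_mul
    (IsAlgClosed.exists_eq_mul_self (AdjoinRoot.mk _ (C d * X + C c)))
  refine ⟨x ^ 2 + y ^ 2, fun h => hc ?_, by ring⟩
  obtain ⟨rfl, rfl⟩ := AdjoinRoot.eq_zero_of_sq_add_sq_eq_zero h
  ring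

/-- In a real closed field `K` (char zero, not algebraically closed, but `K[X]/(X²+1)`
algebraically closed), the set `K_{>0} = {a² : a ∈ K, a ≠ 0}` is closed under addition. -/
theorem pos_closed_under_add (K : Type*) [Field K] [CharZero K]
    (hK : ¬ IsAlgClosed K)
    (hfield : IsField (AdjoinRoot ((X : Polynomial K) ^ 2 + 1)))
    (halg : @IsAlgClosed (AdjoinRoot ((X : Polynomial K) ^ 2 + 1)) hfield.toField)
    (a b : K)
    (ha : a ∈ {x : K | ∃ c : K, c ≠ 0 ∧ x = c ^ 2})
    (hb : b ∈ {x : K | ∃ c : K, c ≠ 0 ∧ x = c ^ 2}) :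
    a + b ∈ {x : K | ∃ c : K, c ≠ 0 ∧ x = c ^ 2} :=
  pos_closed_under_add_general K hfield halg a b ha hb
end

section
/- Let K be a field of characteristic zero which is not algebraically closed but such that K[X]/(X^2+1) is algebraically closed, and let K_{>0} = {a^2 : a ∈ K, a ≠ 0}. Then for every a ∈ K with a ≠ 0, exactly one of the following holds: a ∈ K_{>0} or −a ∈ K_{>0}. Consequently the relation a > b defined by a − b ∈ K_{>0} is a total (linear) order on K. -/
/-!
Let `i` be the root of `X ^ 2 + 1` in `L = K[X]/(X ^ 2 + 1)`, so that every element of `L` is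
uniquely `x + y i` with `x y : K`. If `-1 = e ^ 2` in `K`, then `(i - e) (i + e) = 0` with both
factors nonzero, so `L` is not a field; hence `a` and `-a` are never both nonzero squares. If `L`
is algebraically closed, a nonzero `a : K` has a square root `x + y i` in `L`, and comparing
coordinates gives `x ^ 2 - y ^ 2 = a` and `2 x y = 0`, so `a = x ^ 2` or `-a = y ^ 2`.
-/

open Polynomial

namespace AdjoinRoot

variable {R : Type*} [CommRing R] {f : R[X]}

theorem mk_C_mul_X_add_C (u v : R) : mk f (C v * X + C u) = of f u + of f v * root f := by
  rw [map_add, map_mul, mk_C, mk_C, mk_X, add_comm]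

theorem exists_eq_of_add_of_mul_root (hf : f.Monic) (hdeg : f.natDegree = 2)
    (z : AdjoinRoot f) : ∃ x y : R, z = of f x + of f y * root f := by
  obtain ⟨p, rfl⟩ := mk_surjective z
  have hrem : (p %ₘ f).natDegree ≤ 1 := by
    nontriviality R
    have := natDegree_modByMonic_lt p hf (by rintro rfl; simp at hdeg)
    omega
  refine ⟨(p %ₘ f).coeff 0, (p %ₘ f).coeff 1, ?_⟩
  have hmod : mk f p = mk f (p %ₘ f) :=
    mk_eq_mk.mpr ⟨p /ₘ f, by linear_combination -modByMonic_add_div p f⟩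
  rw [hmod, ← mk_C_mul_X_add_C, ← eq_X_add_C_of_natDegree_le_one hrem]

theorem eq_zero_of_of_add_of_mul_root_eq_zero (hf : f.Monic) (hdeg : 1 < f.natDegree)
    {u v : R} (h : of f u + of f v * root f = 0) : u = 0 ∧ v = 0 := by
  have hlin : C v * X + C u = 0 := by
    by_contra hne
    refine hf.not_dvd_of_natDegree_lt hne (natDegree_linear_le.trans_lt hdeg) (mk_eq_zero.mp ?_)
    rw [mk_C_mul_X_add_C, h]
  constructor
  · simpa using congrArg (coeff · 0) hlin
  · simpa using congrArg (coeff · 1) hlin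

end AdjoinRoot

open AdjoinRoot

section SquaresInQuadraticExtension

variable {R : Type*} [CommRing R]

theorem natDegree_X_sq_add_one [Nontrivial R] : (X ^ 2 + 1 : R[X]).natDegree = 2 := by
  simpa using natDegree_X_pow_add_C (n := 2) (r := (1 : R))

theorem root_X_sq_add_one_sq : root (X ^ 2 + 1 : R[X]) ^ 2 = -1 := by
  have := eval₂_root (X ^ 2 + 1 : R[X])
  simp only [eval₂_add, eval₂_X_pow, eval₂_one] at this
  exact eq_neg_of_add_eq_zero_left this

theorem eq_zero_of_of_add_of_mul_root_X_sq_add_one_eq_zero [Nontrivial R] {u v : R}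
    (h : of (X ^ 2 + 1 : R[X]) u + of _ v * root _ = 0) : u = 0 ∧ v = 0 :=
  eq_zero_of_of_add_of_mul_root_eq_zero (leadingCoeff_X_pow_add_one two_pos)
    (by rw [natDegree_X_sq_add_one]; norm_num) h

theorem not_isSquare_neg_one_of_isField [Nontrivial R]
    (h : IsField (AdjoinRoot (X ^ 2 + 1 : R[X]))) : ¬IsSquare (-1 : R) := by
  rintro ⟨e, he⟩
  have := h.isDomain
  have he' : of (X ^ 2 + 1 : R[X]) e ^ 2 = -1 := by
    rw [← map_pow, pow_two e, ← he, map_neg, map_one]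
  have hfactor :
      (of (X ^ 2 + 1 : R[X]) (-e) + of _ 1 * root _) * (of _ e + of _ 1 * root _) = 0 := by
    simp only [map_neg, map_one, one_mul]
    linear_combination root_X_sq_add_one_sq (R := R) - he'
  rcases mul_eq_zero.mp hfactor with h | h
  · exact one_ne_zero (eq_zero_of_of_add_of_mul_root_X_sq_add_one_eq_zero h).2
  · exact one_ne_zero (eq_zero_of_of_add_of_mul_root_X_sq_add_one_eq_zero h).2

theorem isSquare_or_isSquare_neg_of_isSquare_of [IsDomain R] [NeZero (2 : R)] {a : R}
    (ha : IsSquare (of (X ^ 2 + 1 : R[X]) a)) : IsSquare a ∨ IsSquare (-a) := by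
  obtain ⟨z, hz⟩ := ha
  obtain ⟨x, y, rfl⟩ := exists_eq_of_add_of_mul_root (leadingCoeff_X_pow_add_one two_pos)
    natDegree_X_sq_add_one z
  have hcoord : of (X ^ 2 + 1 : R[X]) (x ^ 2 - y ^ 2 - a) + of _ (2 * x * y) * root _ = 0 := by
    simp only [map_sub, map_mul, map_pow, map_ofNat]
    linear_combination -(of (X ^ 2 + 1 : R[X]) y) ^ 2 * root_X_sq_add_one_sq (R := R) - hz
  obtain ⟨hre, him⟩ := eq_zero_of_of_add_of_mul_root_X_sq_add_one_eq_zero hcoord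
  rcases mul_eq_zero.mp him with hx | rfl
  · rcases mul_eq_zero.mp hx with h2 | rfl
    · exact absurd h2 two_ne_zero
    · exact Or.inr ⟨y, by linear_combination hre⟩
  · exact Or.inl ⟨x, by linear_combination -hre⟩

end SquaresInQuadraticExtension

theorem not_isSquare_neg_of_isSquare {K : Type*} [Field K] (h : ¬IsSquare (-1 : K)) {a : K}
    (ha : a ≠ 0) (hsq : IsSquare a) : ¬IsSquare (-a) := by
  obtain ⟨c, rfl⟩ := hsq
  rintro ⟨d, hd⟩
  have hc : c ≠ 0 := by rintro rfl; simp at ha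
  exact h ⟨d / c, by field_simp; linear_combination hd⟩

theorem exists_ne_zero_and_eq_sq_iff {M : Type*} [MonoidWithZero M] {a : M} (ha : a ≠ 0) :
    (∃ c : M, c ≠ 0 ∧ a = c ^ 2) ↔ IsSquare a := by
  rw [isSquare_iff_exists_sq]
  refine ⟨fun ⟨c, _, hc⟩ => ⟨c, hc⟩, fun ⟨c, hc⟩ => ⟨c, ?_, hc⟩⟩
  rintro rfl
  simp [hc] at ha

theorem pos_trichotomy_general (K : Type*) [Field K] [CharZero K]
    (hfield : IsField (AdjoinRoot ((X : Polynomial K) ^ 2 + 1)))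
    (halg : @IsAlgClosed (AdjoinRoot ((X : Polynomial K) ^ 2 + 1)) hfield.toField) :
    (∀ a : K, a ≠ 0 →
      Xor' (a ∈ {x : K | ∃ c : K, c ≠ 0 ∧ x = c ^ 2})
           (-a ∈ {x : K | ∃ c : K, c ≠ 0 ∧ x = c ^ 2})) ∧
    (∀ a b : K, a = b ∨ a - b ∈ {x : K | ∃ c : K, c ≠ 0 ∧ x = c ^ 2}
      ∨ b - a ∈ {x : K | ∃ c : K, c ≠ 0 ∧ x = c ^ 2}) := by
  let := hfield.toField
  have hneg_one := not_isSquare_neg_one_of_isField hfield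
  have key (a : K) (ha : a ≠ 0) : Xor (IsSquare a) (IsSquare (-a)) := by
    rcases isSquare_or_isSquare_neg_of_isSquare_of
      (IsAlgClosed.exists_eq_mul_self (of _ a)) with h | h
    · exact Or.inl ⟨h, not_isSquare_neg_of_isSquare hneg_one ha h⟩
    · exact Or.inr ⟨h, fun h' => not_isSquare_neg_of_isSquare hneg_one ha h' h⟩
  refine ⟨fun a ha => ?_, fun a b => or_iff_not_imp_left.mpr fun hne => ?_⟩
  · simp only [Set.mem_ofPred_eq, exists_ne_zero_and_eq_sq_iff ha,
      exists_ne_zero_and_eq_sq_iff (neg_ne_zero.mpr ha)]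
    exact key a ha
  have hab : a - b ≠ 0 := sub_ne_zero.mpr hne
  simp only [Set.mem_ofPred_eq, exists_ne_zero_and_eq_sq_iff hab,
    exists_ne_zero_and_eq_sq_iff (sub_ne_zero.mpr (Ne.symm hne))]
  rcases key (a - b) hab with ⟨h, -⟩ | ⟨h, -⟩
  · exact Or.inl h
  · exact Or.inr (by rwa [neg_sub] at h)

/-- In a real closed field `K`, for every nonzero `a` exactly one of `a`, `-a` is a nonzero
square, and consequently the relation `a > b ↔ a - b ∈ K_{>0}` is a total order on `K`
(trichotomy holds). -/
theorem pos_trichotomy (K : Type*) [Field K] [CharZero K]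
    (hK : ¬ IsAlgClosed K)
    (hfield : IsField (AdjoinRoot ((X : Polynomial K) ^ 2 + 1)))
    (halg : @IsAlgClosed (AdjoinRoot ((X : Polynomial K) ^ 2 + 1)) hfield.toField) :
    (∀ a : K, a ≠ 0 →
      Xor' (a ∈ {x : K | ∃ c : K, c ≠ 0 ∧ x = c ^ 2})
           (-a ∈ {x : K | ∃ c : K, c ≠ 0 ∧ x = c ^ 2})) ∧
    (∀ a b : K, a = b ∨ a - b ∈ {x : K | ∃ c : K, c ≠ 0 ∧ x = c ^ 2}
      ∨ b - a ∈ {x : K | ∃ c : K, c ≠ 0 ∧ x = c ^ 2}) :=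
  pos_trichotomy_general K hfield halg
end

section
/- In the ring of 3×3 real matrices, let x_1(a) = I + a·E_{12} and x_2(a) = I + a·E_{23} for a ∈ ℝ. Then for all a, b ∈ ℝ with a > 0 and b > 0, the pair (a', b') = (b, a) is the unique pair of positive reals satisfying x_1(a)·x_2(b)·x_2(b)·x_1(a) = x_2(a')·x_1(b')·x_1(b')·x_2(a'). -/
/-- The Chevalley generator `x₁(a) = I + a·E₁₂` of the upper unitriangular subgroup of `SL₃(ℝ)`. -/
def x1 (a : ℝ) : Matrix (Fin 3) (Fin 3) ℝ := !![1, a, 0; 0, 1, 0; 0, 0, 1]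

/-- The Chevalley generator `x₂(a) = I + a·E₂₃` of the upper unitriangular subgroup of `SL₃(ℝ)`. -/
def x2 (a : ℝ) : Matrix (Fin 3) (Fin 3) ℝ := !![1, 0, 0; 0, 1, a; 0, 0, 1]

def unitriangular (p q r : ℝ) : Matrix (Fin 3) (Fin 3) ℝ := !![1, p, r; 0, 1, q; 0, 0, 1]

theorem unitriangular_inj {p q r p' q' r' : ℝ} :
    unitriangular p q r = unitriangular p' q' r' ↔ p = p' ∧ q = q' ∧ r = r' := by
  constructor
  · intro h
    exact ⟨congrFun (congrFun h 0) 1, congrFun (congrFun h 1) 2, congrFun (congrFun h 0) 2⟩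
  · rintro ⟨rfl, rfl, rfl⟩
    rfl

theorem x1_mul_x2_mul_x2_mul_x1 (a b : ℝ) :
    x1 a * x2 b * x2 b * x1 a = unitriangular (2 * a) (2 * b) (2 * a * b) := by
  ext i j
  fin_cases i <;> fin_cases j <;>
    simp [x1, x2, unitriangular, Matrix.mul_apply, Fin.sum_univ_three] <;> ring

theorem x2_mul_x1_mul_x1_mul_x2 (a b : ℝ) :
    x2 a * x1 b * x1 b * x2 a = unitriangular (2 * b) (2 * a) (2 * a * b) := by
  ext i j
  fin_cases i <;> fin_cases j <;>
    simp [x1, x2, unitriangular, Matrix.mul_apply, Fin.sum_univ_three] <;> ring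

theorem transition_A2_untwisted_general (a b : ℝ) :
    x1 a * x2 b * x2 b * x1 a = x2 b * x1 a * x1 a * x2 b ∧
    ∀ a' b' : ℝ, 0 < a' → 0 < b' →
      x1 a * x2 b * x2 b * x1 a = x2 a' * x1 b' * x1 b' * x2 a' →
      a' = b ∧ b' = a := by
  refine ⟨by rw [x1_mul_x2_mul_x2_mul_x1, x2_mul_x1_mul_x1_mul_x2, mul_right_comm], ?_⟩
  intro a' b' _ _ h
  rw [x1_mul_x2_mul_x2_mul_x1, x2_mul_x1_mul_x1_mul_x2, unitriangular_inj] at h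
  obtain ⟨hb', ha', -⟩ := h
  constructor <;> linarith

/-- Lusztig 4.3(i): for `a, b > 0`, the pair `(a', b') = (b, a)` is the unique pair of
positive reals with `x₁(a)x₂(b)x₂(b)x₁(a) = x₂(a')x₁(b')x₁(b')x₂(a')`. -/
theorem transition_A2_untwisted (a b : ℝ) (ha : 0 < a) (hb : 0 < b) :
    x1 a * x2 b * x2 b * x1 a = x2 b * x1 a * x1 a * x2 b ∧
    ∀ a' b' : ℝ, 0 < a' → 0 < b' →
      x1 a * x2 b * x2 b * x1 a = x2 a' * x1 b' * x1 b' * x2 a' →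
      a' = b ∧ b' = a :=
  transition_A2_untwisted_general a b
end

section
/- In the ring of 3×3 real matrices, let x_1(a) = I + a·E_{12} and x_2(a) = I + a·E_{23}. If a, b, a', b' are positive real numbers such that x_1(a)·x_2(b)·x_1(b)·x_2(a) = x_2(a')·x_1(b')·x_2(b')·x_1(a'), then a + b = a' + b' and a^2 + 2ab = (b')^2. -/
/-- Lusztig 4.3(ii)/4.4: if `a, b, a', b' > 0` satisfy
`x₁(a)x₂(b)x₁(b)x₂(a) = x₂(a')x₁(b')x₂(b')x₁(a')`, then `a + b = a' + b'` and
`a² + 2ab = b'²`. -/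
theorem transition_A2_twisted_relations (a b a' b' : ℝ)
    (ha : 0 < a) (hb : 0 < b) (ha' : 0 < a') (hb' : 0 < b')
    (h : x1 a * x2 b * x1 b * x2 a = x2 a' * x1 b' * x2 b' * x1 a') :
    a + b = a' + b' ∧ a ^ 2 + 2 * a * b = b' ^ 2 := by
  have h01 := congrFun (congrFun h 0) 1
  have h02 := congrFun (congrFun h 0) 2
  simp [x1, x2, Matrix.mul_apply, Fin.sum_univ_succ] at h01 h02
  constructor
  · linarith
  · nlinarith [h01, h02]
end

section
/- In the ring of 3×3 real matrices, let x_1(a) = I + a·E_{12} and x_2(a) = I + a·E_{23}. For all positive reals a, b there exists a unique pair of positive reals (a', b') such that x_1(a)·x_2(b)·x_1(b)·x_2(a) = x_2(a')·x_1(b')·x_2(b')·x_1(a'); explicitly, setting δ = a^2 + 2ab (so δ > 0), one has b' = √δ and a' = b^2/(a + b + √δ), where √δ is the positive square root of δ. -/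
theorem x1_mul_x2_mul_x1_mul_x2 (a b c d : ℝ) :
    x1 a * x2 b * x1 c * x2 d = !![1, a + c, a * b + (a + c) * d; 0, 1, b + d; 0, 0, 1] := by
  simp only [x1, x2, Matrix.mul_fin_three]
  ring_nf

theorem x2_mul_x1_mul_x2_mul_x1 (a b c d : ℝ) :
    x2 a * x1 b * x2 c * x1 d = !![1, b + d, b * c; 0, 1, a + c; 0, 0, 1] := by
  simp only [x1, x2, Matrix.mul_fin_three]
  ring_nf

theorem twisted_braid_eq_iff (a b a' b' : ℝ) :
    x1 a * x2 b * x1 b * x2 a = x2 a' * x1 b' * x2 b' * x1 a' ↔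
      a' + b' = a + b ∧ b' ^ 2 = a ^ 2 + 2 * a * b := by
  rw [x1_mul_x2_mul_x1_mul_x2, x2_mul_x1_mul_x2_mul_x1]
  constructor
  · intro h
    have h01 : a + b = b' + a' := by simpa using congr_fun₂ h 0 1
    have h02 : a * b + (a + b) * a = b' * b' := by simpa using congr_fun₂ h 0 2
    constructor <;> linarith
  · rintro ⟨hsum, hsq⟩
    obtain rfl : a' = a + b - b' := by linarith
    rw [← pow_two, hsq]
    ring_nf

theorem twisted_braid_eq_iff_of_nonneg {a b a' b' : ℝ} (hδ : 0 ≤ a ^ 2 + 2 * a * b) (hb' : 0 ≤ b') :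
    x1 a * x2 b * x1 b * x2 a = x2 a' * x1 b' * x2 b' * x1 a' ↔
      b' = √(a ^ 2 + 2 * a * b) ∧ a' = a + b - √(a ^ 2 + 2 * a * b) := by
  rw [twisted_braid_eq_iff]
  constructor
  · rintro ⟨hsum, hsq⟩
    have hb'_eq : b' = √(a ^ 2 + 2 * a * b) := by rw [← hsq, Real.sqrt_sq hb']
    exact ⟨hb'_eq, by rw [← hb'_eq]; linarith⟩
  · rintro ⟨rfl, rfl⟩
    exact ⟨by ring, Real.sq_sqrt hδ⟩

theorem sq_div_add_add_sqrt {a b : ℝ} (ha : 0 ≤ a) (hb : 0 ≤ b) :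
    b ^ 2 / (a + b + √(a ^ 2 + 2 * a * b)) = a + b - √(a ^ 2 + 2 * a * b) := by
  set s := √(a ^ 2 + 2 * a * b)
  have hs : 0 ≤ s := Real.sqrt_nonneg _
  have hs2 : s ^ 2 = a ^ 2 + 2 * a * b := Real.sq_sqrt (by positivity)
  rcases eq_or_ne (a + b + s) 0 with h | h
  · -- `a = b = 0`, and both sides vanish because `0 / 0 = 0`
    obtain ⟨rfl, rfl, hs0⟩ : a = 0 ∧ b = 0 ∧ s = 0 := ⟨by linarith, by linarith, by linarith⟩
    simp [hs0]
  · rw [div_eq_iff h]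
    nlinarith

/-- Lusztig 4.3(ii) and 4.4: for `a, b > 0` there is a unique pair of positive reals
`(a', b')` with `x₁(a)x₂(b)x₁(b)x₂(a) = x₂(a')x₁(b')x₂(b')x₁(a')`; explicitly, with
`δ = a² + 2ab > 0`, it is given by `b' = √δ` and `a' = b²/(a + b + √δ)`. -/
theorem transition_A2_twisted (a b : ℝ) (ha : 0 < a) (hb : 0 < b) :
    0 < a ^ 2 + 2 * a * b ∧
    (∃! p : ℝ × ℝ, 0 < p.1 ∧ 0 < p.2 ∧
      x1 a * x2 b * x1 b * x2 a = x2 p.1 * x1 p.2 * x2 p.2 * x1 p.1) ∧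
    x1 a * x2 b * x1 b * x2 a =
      x2 (b ^ 2 / (a + b + Real.sqrt (a ^ 2 + 2 * a * b))) *
        x1 (Real.sqrt (a ^ 2 + 2 * a * b)) *
        x2 (Real.sqrt (a ^ 2 + 2 * a * b)) *
        x1 (b ^ 2 / (a + b + Real.sqrt (a ^ 2 + 2 * a * b))) := by
  have hδ : 0 < a ^ 2 + 2 * a * b := by positivity
  have hs : 0 < √(a ^ 2 + 2 * a * b) := Real.sqrt_pos.2 hδ
  have ha' := sq_div_add_add_sqrt ha.le hb.le
  have hsol := (twisted_braid_eq_iff_of_nonneg hδ.le hs.le).2 ⟨rfl, ha'⟩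
  refine ⟨hδ, ⟨(b ^ 2 / (a + b + √(a ^ 2 + 2 * a * b)), √(a ^ 2 + 2 * a * b)),
    ⟨by positivity, hs, hsol⟩, ?_⟩, hsol⟩
  rintro ⟨c, d⟩ ⟨-, hd, h⟩
  obtain ⟨rfl, rfl⟩ := (twisted_braid_eq_iff_of_nonneg hδ.le hd.le).1 h
  rw [ha']
end

section
/- Let J = diag(1, −1) ∈ GL_2(ℂ). Then the set {g · J · g^{−1} · J : g ∈ GL_2(ℂ)} is exactly the set of A ∈ GL_2(ℂ) whose two diagonal entries are equal and whose determinant is 1. -/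
/-- The matrix `J = diag(1, −1)`. -/
def Jmat : Matrix (Fin 2) (Fin 2) ℂ := !![1, 0; 0, -1]

/-!
Conjugation preserves trace and determinant, and right multiplication by `J` turns a matrix of
trace `0` into one with equal diagonal entries; this gives one inclusion. Conversely, if
`A = !![a, b; c, a]` has determinant `1`, then `A J A = J`, so `g = 1 + A` satisfies
`A J g = g J`, i.e. `A = g J g⁻¹ J`, and `det (1 + A) = 2 (1 + a)`. When `a = -1` the matrix
`g = (1 - A) S`, with `S` the coordinate swap (which anticommutes with `J`), works instead, since
`det (1 - A) = 2 (1 - a)`.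
-/

section Ring

variable {R : Type*} [Ring R] {J A : R}

theorem exists_units_eq_mul_mul_inv_mul_of_mul_mul_eq (hJ : J * J = 1) {g : R} (hg : IsUnit g)
    (h : A * J * g = g * J) : ∃ u : Rˣ, A = u * J * ↑u⁻¹ * J := by
  obtain ⟨u, rfl⟩ := hg
  refine ⟨u, ?_⟩
  calc A = A * J * u * ↑u⁻¹ * J := by simp [mul_assoc, hJ]
    _ = u * J * ↑u⁻¹ * J := by rw [h]

theorem mul_mul_one_add_of_mul_mul_eq (hA : A * J * A = J) :
    A * J * (1 + A) = (1 + A) * J := by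
  rw [mul_add, mul_one, hA, add_mul, one_mul, add_comm]

theorem mul_mul_one_sub_mul_of_mul_mul_eq (hA : A * J * A = J) {K : R}
    (hK : K * J = -(J * K)) : A * J * ((1 - A) * K) = (1 - A) * K * J := by
  calc A * J * ((1 - A) * K) = (A * J - A * J * A) * K := by noncomm_ring
    _ = (1 - A) * -(J * K) := by rw [hA]; noncomm_ring
    _ = (1 - A) * K * J := by rw [← hK, mul_assoc]

end Ring

namespace Matrix

variable {R : Type*} [CommRing R]

theorem det_one_add_fin_two (A : Matrix (Fin 2) (Fin 2) R) :
    (1 + A).det = 1 + A.trace + A.det := by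
  rw [det_fin_two, det_fin_two, trace_fin_two]
  simp only [Matrix.add_apply, one_apply_eq, one_apply_ne zero_ne_one, one_apply_ne one_ne_zero]
  ring

theorem det_one_sub_fin_two (A : Matrix (Fin 2) (Fin 2) R) :
    (1 - A).det = 1 - A.trace + A.det := by
  rw [det_fin_two, det_fin_two, trace_fin_two]
  simp only [Matrix.sub_apply, one_apply_eq, one_apply_ne zero_ne_one, one_apply_ne one_ne_zero]
  ring

end Matrix

open Matrix

theorem Jmat_mul_self : Jmat * Jmat = 1 := by
  simp [Jmat, one_fin_two]

theorem det_Jmat : Jmat.det = -1 := by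
  simp [Jmat]

theorem trace_Jmat : Jmat.trace = 0 := by
  simp [Jmat, trace_fin_two]

theorem mul_Jmat_apply_zero_zero_eq_of_trace_eq_zero {M : Matrix (Fin 2) (Fin 2) ℂ}
    (hM : M.trace = 0) : (M * Jmat) 0 0 = (M * Jmat) 1 1 := by
  rw [trace_fin_two] at hM
  simpa [Jmat, mul_apply] using eq_neg_of_add_eq_zero_left hM

theorem mul_Jmat_mul_self_eq_Jmat {A : Matrix (Fin 2) (Fin 2) ℂ}
    (hdiag : A 0 0 = A 1 1) (hdet : A.det = 1) : A * Jmat * A = Jmat := by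
  obtain ⟨a, b, c, rfl⟩ : ∃ a b c, A = !![a, b; c, a] :=
    ⟨A 0 0, A 0 1, A 1 0, hdiag ▸ eta_fin_two A⟩
  rw [det_fin_two_of] at hdet
  rw [Jmat, mul_fin_two, mul_fin_two]
  simp only [EmbeddingLike.apply_eq_iff_eq, vecCons_inj, and_true]
  refine ⟨⟨?_, ?_⟩, ?_, ?_⟩
  · linear_combination hdet
  · ring
  · ring
  · linear_combination -hdet

theorem swap_mul_Jmat : !![0, 1; 1, 0] * Jmat = -(Jmat * !![0, 1; 1, 0]) := by
  simp [Jmat]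

theorem isUnit_swap : IsUnit (!![0, 1; 1, 0] : Matrix (Fin 2) (Fin 2) ℂ) := by
  simp [isUnit_iff_isUnit_det]

/-- Lusztig 5.1 for `n = 2`: the orbit `{g·J·g⁻¹·J : g ∈ GL₂(ℂ)}` is exactly the set of
`2×2` complex matrices with equal diagonal entries and determinant `1`. -/
theorem orbit_eq_equal_diag_det_one :
    {A : Matrix (Fin 2) (Fin 2) ℂ | ∃ g : GL (Fin 2) ℂ,
        A = (g : Matrix (Fin 2) (Fin 2) ℂ) * Jmat *
          ((g⁻¹ : GL (Fin 2) ℂ) : Matrix (Fin 2) (Fin 2) ℂ) * Jmat} =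
      {A : Matrix (Fin 2) (Fin 2) ℂ | A 0 0 = A 1 1 ∧ A.det = 1} := by
  ext A
  constructor
  · rintro ⟨g, rfl⟩
    refine ⟨mul_Jmat_apply_zero_zero_eq_of_trace_eq_zero ?_, ?_⟩
    · rw [trace_units_conj, trace_Jmat]
    · rw [det_mul, det_units_conj, det_Jmat]
      norm_num
  · rintro ⟨hdiag, hdet⟩
    have hA := mul_Jmat_mul_self_eq_Jmat hdiag hdet
    have htrace : A.trace = 2 * A 0 0 := by rw [trace_fin_two, ← hdiag]; ring
    rcases eq_or_ne (A 0 0) (-1) with ht | ht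
    · refine exists_units_eq_mul_mul_inv_mul_of_mul_mul_eq Jmat_mul_self
        (g := (1 - A) * !![0, 1; 1, 0]) ?_ (mul_mul_one_sub_mul_of_mul_mul_eq hA swap_mul_Jmat)
      rw [IsUnit.mul_iff, isUnit_iff_isUnit_det, det_one_sub_fin_two, htrace, hdet, ht]
      exact ⟨by norm_num, isUnit_swap⟩
    · refine exists_units_eq_mul_mul_inv_mul_of_mul_mul_eq Jmat_mul_self
        (g := 1 + A) ?_ (mul_mul_one_add_of_mul_mul_eq hA)
      rw [isUnit_iff_isUnit_det, det_one_add_fin_two, htrace, hdet, isUnit_iff_ne_zero]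
      contrapose! ht
      linear_combination ht / 2
end
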